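/- Let Z = (Z₁, …, Z_d) be a d-dimensional standard normal random vector with d > 4, and set d₁ = d − 2 and d₂ = d − 1. Then for every η ∈ (0,1/2), E[ d Z₁² Z₂² / ‖Z‖² ] ≥ 1 − ξ₁(d₁) and E[ d Z₁⁴ / ‖Z‖² ] ≥ 3 − 2 ξ₂(d₂). -/

import Mathlib

open MeasureTheory ProbabilityTheory Real
open scoped NNReal ENNReal

/-- The `d`-dimensional standard normal distribution, as the product of
one-dimensional standard Gaussians on the coordinates. -/
noncomputable def stdGaussian (d : ℕ) : Measure (Fin d → ℝ) :=
  Measure.pi fun _ => gaussianReal 0 1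

/-- Euclidean dot product on `ℝ^d`. -/
def dotp {d : ℕ} (x y : Fin d → ℝ) : ℝ := ∑ i, x i * y i

/-- Euclidean norm on `ℝ^d`. -/
noncomputable def vecNorm {d : ℕ} (x : Fin d → ℝ) : ℝ := Real.sqrt (∑ i, x i ^ 2)
/-- `ι₁(a) = √(2/π) (a + 1/a) exp(−a²/2)`. -/
noncomputable def iota1 (a : ℝ) : ℝ :=
  Real.sqrt (2 / π) * (a + 1 / a) * Real.exp (-(a ^ 2) / 2)

/-- `ι₂(a) = √(2/π) (a³ + 3a + 3/a) exp(−a²/2)`. -/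
noncomputable def iota2 (a : ℝ) : ℝ :=
  Real.sqrt (2 / π) * (a ^ 3 + 3 * a + 3 / a) * Real.exp (-(a ^ 2) / 2)

/-- `ξ₁(x) = 1 − (1 − ι₁(x^η))² (1 − 2exp(−x^{2η}/8))(x+2)/(x + x^{1/2+η} + 2x^{2η})`. -/
noncomputable def xi1 (η x : ℝ) : ℝ :=
  1 - (1 - iota1 (x ^ η)) ^ 2 *
    ((1 - 2 * Real.exp (-(x ^ (2 * η)) / 8)) * (x + 2)
      / (x + x ^ ((1 : ℝ) / 2 + η) + 2 * x ^ (2 * η)))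

/-- `ξ₂(x) = 3/2 − ((3 − ι₂(x^η))/2)(1 − 2exp(−x^{2η}/8))(x+1)/(x + x^{1/2+η} + x^{2η})`. -/
noncomputable def xi2 (η x : ℝ) : ℝ :=
  3 / 2 - ((3 - iota2 (x ^ η)) / 2) *
    ((1 - 2 * Real.exp (-(x ^ (2 * η)) / 8)) * (x + 1)
      / (x + x ^ ((1 : ℝ) / 2 + η) + x ^ (2 * η)))




lemma intXn (n : ℕ) : Integrable (fun x : ℝ => x ^ n * Real.exp (-(x^2)/2)) := by
  have h := integrable_rpow_mul_exp_neg_mul_sq (b := (1:ℝ)/2) (by norm_num) (s := (n:ℝ))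
    (by exact_mod_cast neg_one_lt_zero.trans_le (Nat.cast_nonneg n))
  have he : (fun x : ℝ => x ^ ((n:ℝ)) * Real.exp (-(1/2) * x^2))
      = fun x : ℝ => x ^ n * Real.exp (-(x^2)/2) := by
    funext x
    rw [Real.rpow_natCast]
    ring_nf
  rwa [he] at h

lemma Jrec (k : ℕ) : ∫ x : ℝ, x^(k+2) * Real.exp (-(x^2)/2)
    = ((k:ℝ)+1) * ∫ x : ℝ, x^k * Real.exp (-(x^2)/2) := by
  set f' : ℝ → ℝ := fun x => ((k:ℝ)+1) * (x^k * Real.exp (-(x^2)/2))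
      - x^(k+2) * Real.exp (-(x^2)/2) with hf'
  have hderiv : ∀ x : ℝ, HasDerivAt (fun y : ℝ => y^(k+1) * Real.exp (-(y^2)/2)) (f' x) x := by
    intro x
    have h1 := (hasDerivAt_pow 2 x).neg.div_const 2
    have h2 : HasDerivAt (fun y : ℝ => -(y^2)/2) (-x) x := by
      rw [show (fun y : ℝ => -(y^2)/2) = fun y => -1/2 * y^2 by funext y; ring]
      refine ((hasDerivAt_pow 2 x).const_mul (-1/2 : ℝ)).congr_deriv ?_
      norm_num; ring
    have h3 := (hasDerivAt_pow (k+1) x).mul h2.exp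
    refine h3.congr_deriv ?_
    simp only [hf']
    push_cast
    ring
  have hint' : Integrable f' := ((intXn k).const_mul _).sub (intXn (k+2))
  have h0 := integral_eq_zero_of_hasDerivAt_of_integrable hderiv hint' (intXn (k+1))
  rw [hf', integral_sub ((intXn k).const_mul _) (intXn (k+2)), integral_const_mul] at h0
  linarith

lemma pdf_eq (x : ℝ) : gaussianPDFReal 0 1 x = (Real.sqrt (2*π))⁻¹ * Real.exp (-(x^2)/2) := by
  simp [gaussianPDFReal]

lemma integral_gaussianReal_eq (g : ℝ → ℝ) :
    ∫ x, g x ∂(gaussianReal 0 1) = ∫ x, gaussianPDFReal 0 1 x * g x := by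
  rw [gaussianReal_of_var_ne_zero 0 one_ne_zero, gaussianPDF_def]
  have : (fun x => ENNReal.ofReal (gaussianPDFReal 0 1 x))
      = fun x => ((Real.toNNReal (gaussianPDFReal 0 1 x) : ℝ≥0) : ℝ≥0∞) := rfl
  rw [this, integral_withDensity_eq_integral_smul
    ((measurable_gaussianPDFReal 0 1).real_toNNReal) g]
  congr 1
  funext x
  rw [NNReal.smul_def, Real.coe_toNNReal _ (gaussianPDFReal_nonneg 0 1 x), smul_eq_mul]

lemma integrable_gaussianReal_iff (g : ℝ → ℝ) :
    Integrable g (gaussianReal 0 1) ↔ Integrable (fun x => gaussianPDFReal 0 1 x * g x) := by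
  rw [gaussianReal_of_var_ne_zero 0 one_ne_zero, gaussianPDF_def]
  have : (fun x => ENNReal.ofReal (gaussianPDFReal 0 1 x))
      = fun x => ((Real.toNNReal (gaussianPDFReal 0 1 x) : ℝ≥0) : ℝ≥0∞) := rfl
  rw [this, integrable_withDensity_iff_integrable_smul
    ((measurable_gaussianPDFReal 0 1).real_toNNReal)]
  constructor <;> intro h <;> refine h.congr (Filter.Eventually.of_forall fun x => ?_) <;>
    simp only [NNReal.smul_def, Real.coe_toNNReal _ (gaussianPDFReal_nonneg 0 1 x), smul_eq_mul]

lemma J0 : ∫ x : ℝ, Real.exp (-(x^2)/2) = Real.sqrt (2*π) := by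
  have h := integral_gaussian (1/2)
  have he : (fun x : ℝ => Real.exp (-(1/2) * x^2)) = fun x : ℝ => Real.exp (-(x^2)/2) := by
    funext x; ring_nf
  rw [he] at h
  rw [h, show π / (1/2) = 2 * π by ring]

noncomputable def mgauss (n : ℕ) : ℝ := ∫ x, x ^ n ∂(gaussianReal 0 1)

lemma intPow_gaussian (n : ℕ) : Integrable (fun x : ℝ => x ^ n) (gaussianReal 0 1) := by
  rw [integrable_gaussianReal_iff]
  have : (fun x : ℝ => gaussianPDFReal 0 1 x * x ^ n)
      = fun x : ℝ => (Real.sqrt (2*π))⁻¹ * (x ^ n * Real.exp (-(x^2)/2)) := by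
    funext x; rw [pdf_eq]; ring
  rw [this]; exact (intXn n).const_mul _

lemma mgauss_eq (n : ℕ) :
    mgauss n = (Real.sqrt (2*π))⁻¹ * ∫ x : ℝ, x^n * Real.exp (-(x^2)/2) := by
  rw [mgauss, integral_gaussianReal_eq]
  have : (fun x : ℝ => gaussianPDFReal 0 1 x * x ^ n)
      = fun x : ℝ => (Real.sqrt (2*π))⁻¹ * (x ^ n * Real.exp (-(x^2)/2)) := by
    funext x; rw [pdf_eq]; ring
  rw [this, integral_const_mul]

lemma sqrt2pi_pos : 0 < Real.sqrt (2*π) := Real.sqrt_pos.2 (by positivity)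

lemma J0' : ∫ x : ℝ, x^0 * Real.exp (-(x^2)/2) = Real.sqrt (2*π) := by
  simpa using J0

lemma mgauss0 : mgauss 0 = 1 := by
  rw [mgauss_eq, J0', inv_mul_cancel₀ sqrt2pi_pos.ne']

lemma J2 : ∫ x : ℝ, x^2 * Real.exp (-(x^2)/2) = Real.sqrt (2*π) := by
  have h := Jrec 0
  rw [J0'] at h
  simpa using h

lemma J4 : ∫ x : ℝ, x^4 * Real.exp (-(x^2)/2) = 3 * Real.sqrt (2*π) := by
  have h := Jrec 2
  rw [J2] at h
  rw [h]; norm_num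

lemma J6 : ∫ x : ℝ, x^6 * Real.exp (-(x^2)/2) = 15 * Real.sqrt (2*π) := by
  have h := Jrec 4
  rw [J4] at h
  rw [h]; norm_num; ring

lemma mgauss2 : mgauss 2 = 1 := by
  rw [mgauss_eq, J2, inv_mul_cancel₀ sqrt2pi_pos.ne']

lemma mgauss4 : mgauss 4 = 3 := by
  rw [mgauss_eq, J4, show (Real.sqrt (2*π))⁻¹ * (3 * Real.sqrt (2*π)) = 3 * ((Real.sqrt (2*π))⁻¹ * Real.sqrt (2*π)) by ring, inv_mul_cancel₀ sqrt2pi_pos.ne', mul_one]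

lemma mgauss6 : mgauss 6 = 15 := by
  rw [mgauss_eq, J6, show (Real.sqrt (2*π))⁻¹ * (15 * Real.sqrt (2*π)) = 15 * ((Real.sqrt (2*π))⁻¹ * Real.sqrt (2*π)) by ring, inv_mul_cancel₀ sqrt2pi_pos.ne', mul_one]

lemma integral_stdGaussian_prod {d : ℕ} (f : Fin d → ℝ → ℝ) :
    ∫ z, ∏ i, f i (z i) ∂(stdGaussian d) = ∏ i, ∫ x, f i x ∂(gaussianReal 0 1) := by
  letI : MeasureSpace ℝ := ⟨gaussianReal 0 1⟩
  haveI : SigmaFinite (volume : Measure ℝ) := inferInstanceAs (SigmaFinite (gaussianReal 0 1))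
  have h : stdGaussian d = (volume : Measure (Fin d → ℝ)) := by
    rw [MeasureTheory.volume_pi]; rfl
  rw [h]
  exact MeasureTheory.integral_fintype_prod_eq_prod f

lemma integrable_stdGaussian_prod {d : ℕ} (f : Fin d → ℝ → ℝ)
    (hf : ∀ i, Integrable (f i) (gaussianReal 0 1)) :
    Integrable (fun z : Fin d → ℝ => ∏ i, f i (z i)) (stdGaussian d) := by
  letI : MeasureSpace ℝ := ⟨gaussianReal 0 1⟩
  haveI : SigmaFinite (volume : Measure ℝ) := inferInstanceAs (SigmaFinite (gaussianReal 0 1))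
  have h : stdGaussian d = (volume : Measure (Fin d → ℝ)) := by
    rw [MeasureTheory.volume_pi]; rfl
  rw [h]
  exact Integrable.fintype_prod hf

lemma prod_if_three {M : Type*} [CommMonoid M] {d : ℕ} (j0 j1 j2 : Fin d)
    (h01 : j0 ≠ j1) (h02 : j0 ≠ j2) (h12 : j1 ≠ j2) (f g h : Fin d → M) :
    (∏ i, (if i = j0 then f i else if i = j1 then g i else if i = j2 then h i else 1))
      = f j0 * g j1 * h j2 := by
  rw [← Finset.mul_prod_erase _ _ (Finset.mem_univ j0),
    ← Finset.mul_prod_erase _ _ (Finset.mem_erase.2 ⟨h01.symm, Finset.mem_univ j1⟩),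
    ← Finset.mul_prod_erase _ _ (Finset.mem_erase.2 ⟨h12.symm,
        Finset.mem_erase.2 ⟨h02.symm, Finset.mem_univ j2⟩⟩),
    Finset.prod_eq_one, mul_one]
  · simp [if_neg (Ne.symm h01), if_neg (Ne.symm h02), if_neg (Ne.symm h12), mul_assoc]
  · intro i hi
    simp only [Finset.mem_erase, Finset.mem_univ, and_true] at hi
    simp [hi.1, hi.2.1, hi.2.2]

section mom3
variable {d : ℕ} (j0 j1 j2 : Fin d) (h01 : j0 ≠ j1) (h02 : j0 ≠ j2) (h12 : j1 ≠ j2) (k l r : ℕ)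
include h01 h02 h12

lemma monomial_eq (z : Fin d → ℝ) :
    z j0 ^ k * z j1 ^ l * z j2 ^ r
      = ∏ i, (if i = j0 then (z i) ^ k else if i = j1 then (z i) ^ l
          else if i = j2 then (z i) ^ r else 1) :=
  (prod_if_three j0 j1 j2 h01 h02 h12 (fun i => (z i)^k) (fun i => (z i)^l)
    (fun i => (z i)^r)).symm

lemma mom3_int : Integrable (fun z : Fin d → ℝ => z j0 ^ k * z j1 ^ l * z j2 ^ r)
    (stdGaussian d) := by
  set F : Fin d → ℝ → ℝ := fun i x => (if i = j0 then x ^ k else if i = j1 then x ^ l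
      else if i = j2 then x ^ r else 1) with hF
  have he : (fun z : Fin d → ℝ => z j0 ^ k * z j1 ^ l * z j2 ^ r)
      = fun z : Fin d → ℝ => ∏ i, F i (z i) := by
    funext z
    simp only [hF]
    exact monomial_eq j0 j1 j2 h01 h02 h12 k l r z
  rw [he]
  refine integrable_stdGaussian_prod _ fun i => ?_
  simp only [hF]
  by_cases h0 : i = j0
  · simpa [h0] using intPow_gaussian k
  by_cases h1 : i = j1
  · simpa [h1, Ne.symm h01] using intPow_gaussian l
  by_cases h2 : i = j2
  · simpa [h2, Ne.symm h02, Ne.symm h12] using intPow_gaussian r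
  · simp [h0, h1, h2]

lemma mom3_eq : ∫ z, z j0 ^ k * z j1 ^ l * z j2 ^ r ∂(stdGaussian d)
    = mgauss k * mgauss l * mgauss r := by
  set F : Fin d → ℝ → ℝ := fun i x => (if i = j0 then x ^ k else if i = j1 then x ^ l
      else if i = j2 then x ^ r else 1) with hF
  have he : (fun z : Fin d → ℝ => z j0 ^ k * z j1 ^ l * z j2 ^ r)
      = fun z : Fin d → ℝ => ∏ i, F i (z i) := by
    funext z
    simp only [hF]
    exact monomial_eq j0 j1 j2 h01 h02 h12 k l r z
  rw [he, integral_stdGaussian_prod]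
  simp only [hF]
  have : ∀ i : Fin d, (∫ x, (if i = j0 then x ^ k else if i = j1 then x ^ l
      else if i = j2 then x ^ r else 1) ∂(gaussianReal 0 1))
      = (if i = j0 then mgauss k else if i = j1 then mgauss l
          else if i = j2 then mgauss r else 1) := by
    intro i
    split_ifs <;> simp [mgauss]
  rw [Finset.prod_congr rfl fun i _ => this i]
  exact prod_if_three j0 j1 j2 h01 h02 h12 (fun _ => mgauss k) (fun _ => mgauss l)
    (fun _ => mgauss r)

end mom3

instance noAtoms_gaussianReal : NullSingletonClass (gaussianReal 0 1) :=
  ⟨fun x => gaussianReal_absolutelyContinuous 0 one_ne_zero (measure_singleton x)⟩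

instance stdGaussian_prob (d : ℕ) : IsProbabilityMeasure (stdGaussian d) := by
  unfold _root_.stdGaussian; infer_instance

lemma ae_sum_sq_pos {d : ℕ} (hd : 0 < d) :
    ∀ᵐ z ∂(stdGaussian d), 0 < ∑ i, z i ^ 2 := by
  filter_upwards [MeasureTheory.Measure.ae_eval_ne (fun _ : Fin d => gaussianReal 0 1)
    ⟨0, hd⟩ 0] with z hz
  have h1 : 0 < z ⟨0, hd⟩ ^ 2 := by positivity
  exact h1.trans_le (Finset.single_le_sum (fun i _ => sq_nonneg (z i)) (Finset.mem_univ _))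

lemma tangent_bound {d : ℕ} (hd : 0 < d) (φ ψ : (Fin d → ℝ) → ℝ) (hmeas : Measurable φ)
    (hφ0 : ∀ z, 0 ≤ φ z) (hψ : Integrable ψ (stdGaussian d))
    (hdom : ∀ z, 0 < (∑ i, z i ^ 2) → φ z / (∑ i, z i ^ 2) ≤ ψ z)
    (hφ : Integrable φ (stdGaussian d))
    (hφS : Integrable (fun z => φ z * ∑ i, z i ^ 2) (stdGaussian d)) (c : ℝ) (hc : 0 < c) :
    (2/c) * (∫ z, φ z ∂(stdGaussian d)) - (1/c^2) * (∫ z, φ z * ∑ i, z i ^ 2 ∂(stdGaussian d))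
      ≤ ∫ z, φ z / (∑ i, z i ^ 2) ∂(stdGaussian d) := by
  have hae := ae_sum_sq_pos hd
  have hSmeas : Measurable (fun z : Fin d → ℝ => ∑ i, z i ^ 2) := by
    exact Finset.measurable_sum _ fun i _ => (measurable_pi_apply i).pow measurable_const
  have hint : Integrable (fun z => φ z / (∑ i, z i ^ 2)) (stdGaussian d) := by
    refine hψ.mono' ((hmeas.div hSmeas).aestronglyMeasurable) ?_
    filter_upwards [hae] with z hz
    rw [Real.norm_eq_abs, abs_of_nonneg (div_nonneg (hφ0 z) hz.le)]
    exact hdom z hz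
  have hlow : Integrable (fun z => (2/c) * φ z - (1/c^2) * (φ z * ∑ i, z i ^ 2))
      (stdGaussian d) := (hφ.const_mul _).sub (hφS.const_mul _)
  have hmono : ∀ᵐ z ∂(stdGaussian d),
      (2/c) * φ z - (1/c^2) * (φ z * ∑ i, z i ^ 2) ≤ φ z / (∑ i, z i ^ 2) := by
    filter_upwards [hae] with z hz
    set S := ∑ i, z i ^ 2 with hS
    have e1 : (2/c - S/c^2) * S = (2*c - S)*S/c^2 := by field_simp
    have h2 : (2*c - S)*S/c^2 ≤ 1 := by
      rw [div_le_one (by positivity)]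
      nlinarith [sq_nonneg (S - c)]
    have h1 : 2/c - S/c^2 ≤ 1/S := (le_div_iff₀ hz).2 (by rw [e1] at *; linarith)
    calc (2/c) * φ z - (1/c^2) * (φ z * S) = φ z * (2/c - S/c^2) := by ring
      _ ≤ φ z * (1/S) := mul_le_mul_of_nonneg_left h1 (hφ0 z)
      _ = φ z / S := by rw [mul_one_div]
  have := integral_mono_ae hlow hint hmono
  rwa [integral_sub (hφ.const_mul _) (hφS.const_mul _), integral_const_mul,
    integral_const_mul] at this

lemma iota1_nonneg {a : ℝ} (ha : 1 ≤ a) : 0 ≤ iota1 a := by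
  have ha0 : 0 < a := one_pos.trans_le ha
  unfold iota1
  positivity

lemma iota2_nonneg {a : ℝ} (ha : 1 ≤ a) : 0 ≤ iota2 a := by
  have ha0 : 0 < a := one_pos.trans_le ha
  unfold iota2
  positivity

lemma iota1_le_two {a : ℝ} (ha : 1 ≤ a) : iota1 a ≤ 2 := by
  have ha0 : 0 < a := one_pos.trans_le ha
  have hsq : Real.sqrt (2/π) ≤ 1 := by
    rw [show (1:ℝ) = Real.sqrt 1 by simp]
    apply Real.sqrt_le_sqrt
    rw [div_le_one Real.pi_pos]
    linarith [Real.pi_gt_three]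
  have key : (a + 1/a) * Real.exp (-(a^2)/2) ≤ 2 := by
    rw [neg_div, Real.exp_neg, ← div_eq_mul_inv, div_le_iff₀ (Real.exp_pos _)]
    have h1 := Real.add_one_le_exp (a^2/2)
    have h2 : 1/a ≤ a := by rw [div_le_iff₀ ha0]; nlinarith
    nlinarith
  have hnn : 0 ≤ (a + 1/a) * Real.exp (-(a^2)/2) := by positivity
  calc iota1 a = Real.sqrt (2/π) * ((a + 1/a) * Real.exp (-(a^2)/2)) := by
        unfold iota1; ring
    _ ≤ 1 * 2 := mul_le_mul hsq key hnn one_pos.le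
    _ = 2 := one_mul 2

lemma iota2_le {a : ℝ} (ha : 1 ≤ a) : iota2 a ≤ 13/3 := by
  have ha0 : 0 < a := one_pos.trans_le ha
  have hsq : Real.sqrt (2/π) ≤ 4/5 := by
    have h1 : (2:ℝ)/π ≤ 16/25 := by
      rw [div_le_div_iff₀ Real.pi_pos (by norm_num)]
      nlinarith [Real.pi_gt_d6]
    calc Real.sqrt (2/π) ≤ Real.sqrt (16/25) := Real.sqrt_le_sqrt h1
      _ = 4/5 := by
          rw [show (16:ℝ)/25 = (4/5)^2 by norm_num, Real.sqrt_sq (by norm_num : (0:ℝ) ≤ 4/5)]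
  have hexpsq : (1 + a^2/4)^2 ≤ Real.exp (a^2/2) := by
    have h1 := Real.add_one_le_exp (a^2/4)
    have h2 : Real.exp (a^2/2) = Real.exp (a^2/4) ^ 2 := by
      rw [← Real.exp_nat_mul]; norm_num; ring_nf
    rw [h2]
    have : (0:ℝ) ≤ 1 + a^2/4 := by positivity
    nlinarith
  have key : (a^3 + 3*a + 3/a) * Real.exp (-(a^2)/2) ≤ 65/12 := by
    rw [neg_div, Real.exp_neg, ← div_eq_mul_inv, div_le_iff₀ (Real.exp_pos _)]
    have h2 : 3/a ≤ 3*a := by rw [div_le_iff₀ ha0]; nlinarith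
    have h3 : a^3 + 3*a + 3/a ≤ a^3 + 6*a := by linarith
    have h4 : a^3 + 6*a ≤ 65/12 * (1 + a^2/4)^2 := by nlinarith [sq_nonneg (a-1), sq_nonneg (a^2 - 2*a), sq_nonneg (a^2-2), sq_nonneg a]
    nlinarith [Real.exp_pos (a^2/2)]
  have hnn : 0 ≤ (a^3 + 3*a + 3/a) * Real.exp (-(a^2)/2) := by positivity
  calc iota2 a = Real.sqrt (2/π) * ((a^3 + 3*a + 3/a) * Real.exp (-(a^2)/2)) := by
        unfold iota2; ring
    _ ≤ (4/5) * (65/12) := mul_le_mul hsq key hnn (by norm_num)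
    _ = 13/3 := by norm_num

lemma rpow_twoeta {x η : ℝ} (hx0 : 0 < x) : x ^ (2*η) = (x ^ η)^2 := by
  rw [mul_comm, Real.rpow_mul hx0.le]
  rw [show ((2:ℝ)) = ((2:ℕ):ℝ) by norm_num, Real.rpow_natCast]


lemma core1 {W B x D : ℝ} (hx : 3 ≤ x) (hD0 : 0 < D) (hW0 : 0 ≤ W) (hW1 : W ≤ 1)
    (hB1 : B ≤ 1) (hD6 : 0 < B → x + 6 ≤ D) :
    W * (B * (x+2) / D) ≤ (x+2)/(x+6) := by
  rcases le_or_gt B 0 with hB | hB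
  · have h1 : B * (x+2) ≤ 0 := mul_nonpos_of_nonpos_of_nonneg hB (by linarith)
    have h2 : B * (x+2) / D ≤ 0 := div_nonpos_of_nonpos_of_nonneg h1 hD0.le
    have h3 : W * (B * (x+2)/D) ≤ 0 := mul_nonpos_of_nonneg_of_nonpos hW0 h2
    have h4 : (0:ℝ) ≤ (x+2)/(x+6) := div_nonneg (by linarith) (by linarith)
    linarith
  · have hDge : x + 6 ≤ D := hD6 hB
    have hnn : 0 ≤ B * (x+2) / D := div_nonneg (mul_nonneg hB.le (by linarith)) hD0.le
    calc W * (B * (x+2)/D) ≤ B * (x+2)/D := mul_le_of_le_one_left hnn hW1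
      _ ≤ (x+2)/D := by gcongr; nlinarith
      _ ≤ (x+2)/(x+6) := div_le_div_of_nonneg_left (by linarith) (by linarith) hDge

lemma core2 {A B x D : ℝ} (hx : 4 ≤ x) (hD0 : 0 < D) (hDx : x + 1 ≤ D) (hA3 : A ≤ 3)
    (hAm : -(4/3) ≤ A) (hB1 : B ≤ 1) (hBm : -1 ≤ B) (hD5 : 0 < B → x + 5 ≤ D) :
    A * (B * (x+1) / D) ≤ 3*(x+1)/(x+5) := by
  have hRHS : (0:ℝ) ≤ 3*(x+1)/(x+5) := by positivity
  rcases le_or_gt B 0 with hB0 | hB0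
  · rcases le_or_gt A 0 with hA0 | hA0
    · have hAB : A * B ≤ 4/3 := by
        nlinarith [mul_nonneg (by linarith : (0:ℝ) ≤ -B) (by linarith : (0:ℝ) ≤ A + 4/3)]
      rw [show A * (B * (x+1)/D) = A * B * (x+1)/D by ring,
        div_le_div_iff₀ hD0 (by linarith : (0:ℝ) < x+5)]
      have hxx : (0:ℝ) ≤ (x+1)*(x+5) := by nlinarith
      have h5 : A * B * ((x+1) * (x+5)) ≤ (4/3) * ((x+1) * (x+5)) :=
        mul_le_mul_of_nonneg_right hAB hxx
      have h6 : (4/3) * ((x+1) * (x+5)) ≤ 3 * (x+1) * (x+1) := by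
        nlinarith [mul_nonneg (by linarith : (0:ℝ) ≤ x+1) (by linarith : (0:ℝ) ≤ 5*x - 11)]
      have h7 : 3 * (x+1) * (x+1) ≤ 3 * (x+1) * D := by
        nlinarith [mul_le_mul_of_nonneg_left hDx (by linarith : (0:ℝ) ≤ 3*(x+1))]
      nlinarith [h5, h6, h7]
    · have h1 : B * (x+1) / D ≤ 0 :=
        div_nonpos_of_nonpos_of_nonneg (mul_nonpos_of_nonpos_of_nonneg hB0 (by linarith)) hD0.le
      have h2 : A * (B * (x+1)/D) ≤ 0 := mul_nonpos_of_nonneg_of_nonpos hA0.le h1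
      linarith
  · rcases le_or_gt A 0 with hA0 | hA0
    · have h1 : 0 ≤ B * (x+1) / D := div_nonneg (mul_nonneg hB0.le (by linarith)) hD0.le
      have h2 : A * (B * (x+1)/D) ≤ 0 := mul_nonpos_of_nonpos_of_nonneg hA0 h1
      linarith
    · have hDge : x + 5 ≤ D := hD5 hB0
      rw [show A * (B * (x+1)/D) = A * B * (x+1)/D by ring,
        div_le_div_iff₀ hD0 (by linarith : (0:ℝ) < x+5)]
      have hAB : A * B ≤ 3 := by
        nlinarith [mul_le_mul hA3 hB1 hB0.le (by norm_num : (0:ℝ) ≤ 3)]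
      have hxx : (0:ℝ) ≤ (x+1)*(x+5) := by nlinarith
      have h5 : A * B * ((x+1) * (x+5)) ≤ 3 * ((x+1) * (x+5)) :=
        mul_le_mul_of_nonneg_right hAB hxx
      have h7 : 3 * ((x+1) * (x+5)) ≤ 3 * (x+1) * D := by
        nlinarith [mul_le_mul_of_nonneg_left hDge (by linarith : (0:ℝ) ≤ 3*(x+1))]
      nlinarith [h5, h7]

lemma exp_lt_half_sq {a : ℝ} (hE : Real.exp (-(a^2)/8) < 1/2) : 5 ≤ a^2 := by
  have hlog : -(a^2)/8 < Real.log (1/2) := (Real.lt_log_iff_exp_lt (by norm_num)).2 hE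
  have hlog2 : Real.log (1/2) = - Real.log 2 := by rw [one_div, Real.log_inv]
  nlinarith [Real.log_two_gt_d9]

lemma xi1_bound {η x : ℝ} (hη0 : 0 < η) (hx : 3 ≤ x) :
    1 - xi1 η x ≤ (x+2)/(x+6) := by
  have hx0 : 0 < x := by linarith
  have ha : 1 ≤ x ^ η := Real.one_le_rpow (by linarith) hη0.le
  have h2η : x ^ (2*η) = (x ^ η)^2 := rpow_twoeta hx0
  have hr : 0 ≤ x ^ ((1:ℝ)/2 + η) := Real.rpow_nonneg hx0.le _
  have hD0 : 0 < x + x ^ ((1:ℝ)/2+η) + 2 * x^(2*η) := by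
    rw [h2η]; nlinarith [sq_nonneg (x ^ η)]
  have hgoal : 1 - xi1 η x = (1 - iota1 (x ^ η))^2 *
      ((1 - 2 * Real.exp (-(x ^ (2*η))/8)) * (x+2) / (x + x ^ ((1:ℝ)/2+η) + 2 * x^(2*η))) := by
    unfold xi1; ring
  rw [hgoal]
  refine core1 hx hD0 (sq_nonneg _) ?_ ?_ ?_
  · nlinarith [iota1_nonneg ha, iota1_le_two ha]
  · nlinarith [Real.exp_pos (-(x^(2*η))/8)]
  · intro hB
    have hE : Real.exp (-((x ^ η)^2)/8) < 1/2 := by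
      rw [← h2η]; linarith
    have ha2 := exp_lt_half_sq hE
    rw [h2η]; linarith

lemma xi2_bound {η x : ℝ} (hη0 : 0 < η) (hx : 4 ≤ x) :
    3 - 2 * xi2 η x ≤ 3*(x+1)/(x+5) := by
  have hx0 : 0 < x := by linarith
  have ha : 1 ≤ x ^ η := Real.one_le_rpow (by linarith) hη0.le
  have h2η : x ^ (2*η) = (x ^ η)^2 := rpow_twoeta hx0
  have hr : 0 ≤ x ^ ((1:ℝ)/2 + η) := Real.rpow_nonneg hx0.le _
  have hD0 : 0 < x + x ^ ((1:ℝ)/2+η) + x^(2*η) := by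
    rw [h2η]; nlinarith [sq_nonneg (x ^ η)]
  have hDx : x + 1 ≤ x + x ^ ((1:ℝ)/2+η) + x^(2*η) := by
    rw [h2η]; nlinarith
  have hgoal : 3 - 2 * xi2 η x = (3 - iota2 (x ^ η)) *
      ((1 - 2 * Real.exp (-(x ^ (2*η))/8)) * (x+1) / (x + x ^ ((1:ℝ)/2+η) + x^(2*η))) := by
    unfold xi2; ring
  rw [hgoal]
  refine core2 hx hD0 hDx ?_ ?_ ?_ ?_ ?_
  · linarith [iota2_nonneg ha]
  · linarith [iota2_le ha]
  · nlinarith [Real.exp_pos (-(x^(2*η))/8)]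
  · have h1 : Real.exp (-(x^(2*η))/8) ≤ 1 := by
      rw [Real.exp_le_one_iff, h2η]
      nlinarith [sq_nonneg (x ^ η)]
    linarith
  · intro hB
    have hE : Real.exp (-((x ^ η)^2)/8) < 1/2 := by
      rw [← h2η]; linarith
    have ha2 := exp_lt_half_sq hE
    rw [h2η]; linarith


lemma sum_if_two {d : ℕ} (hd : 2 ≤ d) (i0 i1 : Fin d) (h01 : i0 ≠ i1) (c : ℝ) :
    (∑ j : Fin d, (if j = i0 then c else if j = i1 then c else 1)) = 2*c + (d:ℝ) - 2 := by
  rw [← Finset.add_sum_erase _ _ (Finset.mem_univ i0),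
      ← Finset.add_sum_erase _ _ (Finset.mem_erase.2 ⟨h01.symm, Finset.mem_univ i1⟩)]
  rw [if_pos rfl, if_neg (Ne.symm h01), if_pos rfl]
  have h1 : ∀ j ∈ (Finset.univ.erase i0).erase i1,
      (if j = i0 then c else if j = i1 then c else 1) = (1:ℝ) := by
    intro j hj
    simp only [Finset.mem_erase, Finset.mem_univ, and_true] at hj
    simp [hj.1, hj.2]
  rw [Finset.sum_congr rfl h1, Finset.sum_const, nsmul_eq_mul,
    Finset.card_erase_of_mem (Finset.mem_erase.2 ⟨h01.symm, Finset.mem_univ i1⟩),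
    Finset.card_erase_of_mem (Finset.mem_univ i0), Finset.card_univ, Fintype.card_fin]
  rw [show d - 1 - 1 = d - 2 by omega, Nat.cast_sub hd]
  push_cast
  ring

lemma sum_if_one {d : ℕ} (hd : 1 ≤ d) (i0 : Fin d) (c e : ℝ) :
    (∑ j : Fin d, (if j = i0 then c else e)) = c + ((d:ℝ) - 1) * e := by
  rw [← Finset.add_sum_erase _ _ (Finset.mem_univ i0), if_pos rfl]
  have h1 : ∀ j ∈ Finset.univ.erase i0, (if j = i0 then c else e) = e := by
    intro j hj
    simp only [Finset.mem_erase, Finset.mem_univ, and_true] at hj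
    simp [hj]
  rw [Finset.sum_congr rfl h1, Finset.sum_const, nsmul_eq_mul,
    Finset.card_erase_of_mem (Finset.mem_univ i0), Finset.card_univ, Fintype.card_fin,
    Nat.cast_sub hd]
  push_cast
  ring


/-- For a `d`-dimensional standard normal vector `Z` with `d > 4`, `d₁ = d−2`, `d₂ = d−1`,
and any `η ∈ (0,1/2)`: `E[d Z₁² Z₂² / ‖Z‖²] ≥ 1 − ξ₁(d₁)` and
`E[d Z₁⁴ / ‖Z‖²] ≥ 3 − 2 ξ₂(d₂)`. -/
theorem statement18 {d : ℕ} (hd : 4 < d) (η : ℝ) (hη : η ∈ Set.Ioo (0 : ℝ) (1 / 2)) :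
    1 - xi1 η ((d : ℝ) - 2)
      ≤ (∫ z, (d : ℝ) * z (⟨0, by omega⟩ : Fin d) ^ 2 * z (⟨1, by omega⟩ : Fin d) ^ 2
            / (∑ i, z i ^ 2) ∂(stdGaussian d)) ∧
    3 - 2 * xi2 η ((d : ℝ) - 1)
      ≤ (∫ z, (d : ℝ) * z (⟨0, by omega⟩ : Fin d) ^ 4 / (∑ i, z i ^ 2) ∂(stdGaussian d)) := by
  obtain ⟨hη0, hη2⟩ := hη
  have hd0 : 0 < d := by omega
  set i0 : Fin d := ⟨0, by omega⟩ with hi0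
  set i1 : Fin d := ⟨1, by omega⟩ with hi1
  set i2 : Fin d := ⟨2, by omega⟩ with hi2
  have h01 : i0 ≠ i1 := by simp [hi0, hi1, Fin.ext_iff]
  have h02 : i0 ≠ i2 := by simp [hi0, hi2, Fin.ext_iff]
  have h12 : i1 ≠ i2 := by simp [hi1, hi2, Fin.ext_iff]
  have hdR : (5:ℝ) ≤ (d:ℝ) := by exact_mod_cast hd
  set c : ℝ := (d:ℝ) + 4 with hc_def
  have hc : 0 < c := by rw [hc_def]; linarith
  constructor
  · -- first inequality
    set φ : (Fin d → ℝ) → ℝ := fun z => z i0 ^ 2 * z i1 ^ 2 with hφ_def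
    have hmeas : Measurable φ := by
      apply Measurable.mul <;> exact (measurable_pi_apply _).pow measurable_const
    have hφ0 : ∀ z, 0 ≤ φ z := fun z => by positivity
    have hψ : Integrable (fun z : Fin d → ℝ => z i1 ^ 2) (stdGaussian d) := by
      have h := mom3_int i1 i0 i2 h01.symm h12 h02 2 0 0
      simpa using h
    have hdom : ∀ z : Fin d → ℝ, 0 < (∑ i, z i ^ 2) → φ z / (∑ i, z i ^ 2) ≤ z i1 ^ 2 := by
      intro z hz
      simp only [hφ_def]
      rw [div_le_iff₀ hz]
      have h1 : z i0 ^ 2 ≤ ∑ i, z i ^ 2 :=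
        Finset.single_le_sum (fun i _ => sq_nonneg (z i)) (Finset.mem_univ i0)
      nlinarith [sq_nonneg (z i1)]
    have hφ : Integrable φ (stdGaussian d) := by
      have h := mom3_int i0 i1 i2 h01 h02 h12 2 2 0
      simpa using h
    have hterm_int : ∀ j : Fin d,
        Integrable (fun z : Fin d → ℝ => z i0^2 * z i1^2 * z j^2) (stdGaussian d) := by
      intro j
      by_cases hj0 : j = i0
      · subst hj0
        have e : (fun z : Fin d → ℝ => z i0^2 * z i1^2 * z i0^2)
            = fun z => z i0^4 * z i1^2 * z i2^0 := funext fun z => by ring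
        rw [e]
        exact mom3_int i0 i1 i2 h01 h02 h12 4 2 0
      by_cases hj1 : j = i1
      · subst hj1
        have e : (fun z : Fin d → ℝ => z i0^2 * z i1^2 * z i1^2)
            = fun z => z i0^2 * z i1^4 * z i2^0 := funext fun z => by ring
        rw [e]
        exact mom3_int i0 i1 i2 h01 h02 h12 2 4 0
      · exact mom3_int i0 i1 j h01 (Ne.symm hj0) (Ne.symm hj1) 2 2 2
    have hterm_val : ∀ j : Fin d, (∫ z, z i0^2 * z i1^2 * z j^2 ∂(stdGaussian d))
        = if j = i0 then 3 else if j = i1 then 3 else 1 := by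
      intro j
      by_cases hj0 : j = i0
      · subst hj0
        rw [if_pos rfl]
        have e : (fun z : Fin d → ℝ => z i0^2 * z i1^2 * z i0^2)
            = fun z => z i0^4 * z i1^2 * z i2^0 := funext fun z => by ring
        rw [e, mom3_eq i0 i1 i2 h01 h02 h12 4 2 0, mgauss4, mgauss2, mgauss0]
        norm_num
      by_cases hj1 : j = i1
      · subst hj1
        rw [if_neg hj0, if_pos rfl]
        have e : (fun z : Fin d → ℝ => z i0^2 * z i1^2 * z i1^2)
            = fun z => z i0^2 * z i1^4 * z i2^0 := funext fun z => by ring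
        rw [e, mom3_eq i0 i1 i2 h01 h02 h12 2 4 0, mgauss4, mgauss2, mgauss0]
        norm_num
      · rw [if_neg hj0, if_neg hj1,
          mom3_eq i0 i1 j h01 (Ne.symm hj0) (Ne.symm hj1) 2 2 2, mgauss2]
        norm_num
    have eS : (fun z : Fin d → ℝ => φ z * (∑ i, z i ^ 2))
        = fun z => ∑ j, z i0^2 * z i1^2 * z j^2 := by
      funext z
      rw [hφ_def, Finset.mul_sum]
    have hφS : Integrable (fun z => φ z * ∑ i, z i ^ 2) (stdGaussian d) := by
      rw [eS]
      exact integrable_finset_sum _ fun j _ => hterm_int j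
    have E1 : (∫ z, φ z ∂(stdGaussian d)) = 1 := by
      have h := mom3_eq i0 i1 i2 h01 h02 h12 2 2 0
      rw [mgauss2, mgauss0] at h
      simpa [hφ_def] using h
    have E2 : (∫ z, φ z * ∑ i, z i ^ 2 ∂(stdGaussian d)) = (d:ℝ) + 4 := by
      rw [eS, integral_finset_sum _ fun j _ => hterm_int j,
        Finset.sum_congr rfl fun j _ => hterm_val j, sum_if_two (by omega) i0 i1 h01 3]
      ring
    have key := tangent_bound hd0 φ (fun z => z i1 ^ 2) hmeas hφ0 hψ hdom hφ hφS c hc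
    rw [E1, E2] at key
    have hlow : (1:ℝ)/c ≤ ∫ z, φ z / (∑ i, z i ^ 2) ∂(stdGaussian d) := by
      have e3 : (2/c) * 1 - (1/c^2) * ((d:ℝ)+4) = 1/c := by
        rw [hc_def]; field_simp; ring
      linarith [key, e3.symm.le]
    have etarget : (fun z : Fin d → ℝ =>
        (d : ℝ) * z i0 ^ 2 * z i1 ^ 2 / (∑ i, z i ^ 2))
        = fun z => (d:ℝ) * (φ z / (∑ i, z i ^ 2)) := by
      funext z
      simp only [hφ_def]
      ring
    rw [etarget, integral_const_mul]
    have hxb := xi1_bound (x := (d:ℝ) - 2) hη0 (by linarith)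
    have e4 : ((d:ℝ) - 2 + 2)/((d:ℝ) - 2 + 6) = (d:ℝ)/c := by rw [hc_def]; congr 1 <;> ring
    rw [e4] at hxb
    have e5 : (d:ℝ)/c = (d:ℝ) * (1/c) := by ring
    calc 1 - xi1 η ((d:ℝ) - 2) ≤ (d:ℝ)/c := hxb
      _ = (d:ℝ) * (1/c) := e5
      _ ≤ (d:ℝ) * ∫ z, φ z / (∑ i, z i ^ 2) ∂(stdGaussian d) := by
          apply mul_le_mul_of_nonneg_left hlow (by positivity)
  · -- second inequality
    set φ : (Fin d → ℝ) → ℝ := fun z => z i0 ^ 4 with hφ_def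
    have hmeas : Measurable φ := (measurable_pi_apply _).pow measurable_const
    have hφ0 : ∀ z, 0 ≤ φ z := fun z => by positivity
    have hψ : Integrable (fun z : Fin d → ℝ => z i0 ^ 2) (stdGaussian d) := by
      have h := mom3_int i0 i1 i2 h01 h02 h12 2 0 0
      simpa using h
    have hdom : ∀ z : Fin d → ℝ, 0 < (∑ i, z i ^ 2) → φ z / (∑ i, z i ^ 2) ≤ z i0 ^ 2 := by
      intro z hz
      simp only [hφ_def]
      rw [div_le_iff₀ hz]
      have h1 : z i0 ^ 2 ≤ ∑ i, z i ^ 2 :=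
        Finset.single_le_sum (fun i _ => sq_nonneg (z i)) (Finset.mem_univ i0)
      nlinarith [sq_nonneg (z i0)]
    have hφ : Integrable φ (stdGaussian d) := by
      have h := mom3_int i0 i1 i2 h01 h02 h12 4 0 0
      simpa using h
    have hterm_int : ∀ j : Fin d,
        Integrable (fun z : Fin d → ℝ => z i0^4 * z j^2) (stdGaussian d) := by
      intro j
      by_cases hj0 : j = i0
      · subst hj0
        have e : (fun z : Fin d → ℝ => z i0^4 * z i0^2)
            = fun z => z i0^6 * z i1^0 * z i2^0 := funext fun z => by ring
        rw [e]
        exact mom3_int i0 i1 i2 h01 h02 h12 6 0 0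
      by_cases hj1 : j = i1
      · subst hj1
        have e : (fun z : Fin d → ℝ => z i0^4 * z i1^2)
            = fun z => z i0^4 * z i1^2 * z i2^0 := funext fun z => by ring
        rw [e]
        exact mom3_int i0 i1 i2 h01 h02 h12 4 2 0
      · have e : (fun z : Fin d → ℝ => z i0^4 * z j^2)
            = fun z => z i0^4 * z j^2 * z i1^0 := funext fun z => by ring
        rw [e]
        exact mom3_int i0 j i1 (Ne.symm hj0) h01 hj1 4 2 0
    have hterm_val : ∀ j : Fin d, (∫ z, z i0^4 * z j^2 ∂(stdGaussian d))
        = if j = i0 then 15 else 3 := by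
      intro j
      by_cases hj0 : j = i0
      · subst hj0
        rw [if_pos rfl]
        have e : (fun z : Fin d → ℝ => z i0^4 * z i0^2)
            = fun z => z i0^6 * z i1^0 * z i2^0 := funext fun z => by ring
        rw [e, mom3_eq i0 i1 i2 h01 h02 h12 6 0 0, mgauss6, mgauss0]
        norm_num
      by_cases hj1 : j = i1
      · subst hj1
        rw [if_neg hj0]
        have e : (fun z : Fin d → ℝ => z i0^4 * z i1^2)
            = fun z => z i0^4 * z i1^2 * z i2^0 := funext fun z => by ring
        rw [e, mom3_eq i0 i1 i2 h01 h02 h12 4 2 0, mgauss4, mgauss2, mgauss0]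
        norm_num
      · rw [if_neg hj0]
        have e : (fun z : Fin d → ℝ => z i0^4 * z j^2)
            = fun z => z i0^4 * z j^2 * z i1^0 := funext fun z => by ring
        rw [e, mom3_eq i0 j i1 (Ne.symm hj0) h01 hj1 4 2 0,
          mgauss4, mgauss2, mgauss0]
        norm_num
    have eS : (fun z : Fin d → ℝ => φ z * (∑ i, z i ^ 2))
        = fun z => ∑ j, z i0^4 * z j^2 := by
      funext z
      rw [hφ_def, Finset.mul_sum]
    have hφS : Integrable (fun z => φ z * ∑ i, z i ^ 2) (stdGaussian d) := by
      rw [eS]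
      exact integrable_finset_sum _ fun j _ => hterm_int j
    have E1 : (∫ z, φ z ∂(stdGaussian d)) = 3 := by
      have h := mom3_eq i0 i1 i2 h01 h02 h12 4 0 0
      rw [mgauss4, mgauss0] at h
      simpa [hφ_def] using h
    have E2 : (∫ z, φ z * ∑ i, z i ^ 2 ∂(stdGaussian d)) = 3*(d:ℝ) + 12 := by
      rw [eS, integral_finset_sum _ fun j _ => hterm_int j,
        Finset.sum_congr rfl fun j _ => hterm_val j, sum_if_one (by omega) i0 15 3]
      ring
    have key := tangent_bound hd0 φ (fun z => z i0 ^ 2) hmeas hφ0 hψ hdom hφ hφS c hc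
    rw [E1, E2] at key
    have hlow : (3:ℝ)/c ≤ ∫ z, φ z / (∑ i, z i ^ 2) ∂(stdGaussian d) := by
      have e3 : (2/c) * 3 - (1/c^2) * (3*(d:ℝ)+12) = 3/c := by
        rw [hc_def]; field_simp; ring
      linarith [key, e3.symm.le]
    have etarget : (fun z : Fin d → ℝ =>
        (d : ℝ) * z i0 ^ 4 / (∑ i, z i ^ 2))
        = fun z => (d:ℝ) * (φ z / (∑ i, z i ^ 2)) := by
      funext z
      simp only [hφ_def]
      ring
    rw [etarget, integral_const_mul]
    have hxb := xi2_bound (x := (d:ℝ) - 1) hη0 (by linarith)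
    have e4 : 3*((d:ℝ) - 1 + 1)/((d:ℝ) - 1 + 5) = 3*(d:ℝ)/c := by rw [hc_def]; congr 1 <;> ring
    rw [e4] at hxb
    calc 3 - 2 * xi2 η ((d:ℝ) - 1) ≤ 3*(d:ℝ)/c := hxb
      _ = (d:ℝ) * (3/c) := by ring
      _ ≤ (d:ℝ) * ∫ z, φ z / (∑ i, z i ^ 2) ∂(stdGaussian d) := by
          apply mul_le_mul_of_nonneg_left hlow (by positivity)
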